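/- Let A be a von Neumann algebra. The relation on PPU(A) defined by φ ≤ φ' iff φ⁻¹φ' ∈ PPU⁺(A) is a partial order under which PPU(A) is a lattice: every pair of elements of PPU(A) has a least upper bound and a greatest lower bound. -/

import Mathlib

noncomputable section

/-- Finite Laurent polynomials `A[t,t⁻¹]` with coefficients among the bounded operators
on `H`, with convolution product. -/
abbrev LaurentOp (H : Type*) [NormedAddCommGroup H] [InnerProductSpace ℂ H]
    [CompleteSpace H] : Type _ :=
  AddMonoidAlgebra (H →L[ℂ] H) ℤ

variable {H : Type*} [NormedAddCommGroup H] [InnerProductSpace ℂ H] [CompleteSpace H]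

/-- The involution `φ* = Σ tⁱ (φ₋ᵢ)*` on `B(H)[t,t⁻¹]` (with `*` the adjoint). -/
def lstar (φ : LaurentOp H) : LaurentOp H :=
  .ofCoeff (Finsupp.equivMapDomain (Equiv.neg ℤ) (Finsupp.mapRange star (star_zero _) φ.coeff))

/-- The specialization `ε₁(φ) = Σᵢ φᵢ`. -/
def eps1 (φ : LaurentOp H) : H →L[ℂ] H := φ.coeff.sum fun _ a => a

/-- Membership in `PPU(A)`: all coefficients of `φ` lie in the von Neumann algebra `A`,
`φ` is paraunitary (`φ*φ = φφ* = 1`), and `ε₁(φ) = 1`. -/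
def InPPU (A : VonNeumannAlgebra H) (φ : LaurentOp H) : Prop :=
  (∀ i, φ.coeff i ∈ A) ∧ lstar φ * φ = 1 ∧ φ * lstar φ = 1 ∧ eps1 φ = 1

/-- Membership in `PPU⁺(A) = PPU(A) ∩ A[t]`. -/
def InPPUplus (A : VonNeumannAlgebra H) (φ : LaurentOp H) : Prop :=
  InPPU A φ ∧ ∀ i < (0 : ℤ), φ.coeff i = 0

/-- The action of a Laurent polynomial on a two-sided sequence:
`(φx)ᵢ = Σ_k φ_k (x_{i−k})`. -/
def act (φ : LaurentOp H) (x : ℤ → H) : ℤ → H :=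
  fun i => ∑ k ∈ φ.coeff.support, φ.coeff k (x (i - k))

/-- `tⁿH[[t⁻¹]]`: the square-summable sequences (i.e. elements of
`H[[t,t⁻¹]] = ℓ²(ℤ,H)`) vanishing in all degrees `> n`. -/
def Hmn (H : Type*) [NormedAddCommGroup H] [InnerProductSpace ℂ H] [CompleteSpace H]
    (n : ℤ) : Set (ℤ → H) :=
  {x | Memℓp x 2 ∧ ∀ i > n, x i = 0}

/-- `φ·H[[t⁻¹]]`, the image of `H[[t⁻¹]] = t⁰H[[t⁻¹]]` under the action of `φ`. -/
def actH (φ : LaurentOp H) : Set (ℤ → H) := act φ '' Hmn H 0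

/-- `S` is a closed linear subspace of `H[[t,t⁻¹]] = ℓ²(ℤ,H)` which is invariant under
the actions of the commutant `A'` (acting coefficientwise) and of `t⁻¹` (the shift). -/
def IsInvClosed (A : VonNeumannAlgebra H) (S : Set (ℤ → H)) : Prop :=
  (∀ x ∈ S, Memℓp x 2) ∧
  IsClosed {y : lp (fun _ : ℤ => H) 2 | (y : ℤ → H) ∈ S} ∧
  (0 ∈ S) ∧ (∀ x ∈ S, ∀ y ∈ S, x + y ∈ S) ∧ (∀ (c : ℂ), ∀ x ∈ S, c • x ∈ S) ∧
  (∀ x ∈ S, (fun i => x (i + 1)) ∈ S) ∧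
  (∀ ψ ∈ A.commutant, ∀ x ∈ S, (fun i => ψ (x i)) ∈ S)

/-- The orthogonal projection `π_M` onto a closed subspace `M`, as an operator on `H`. -/
def projL (M : Submodule ℂ H) (hM : IsClosed (M : Set H)) : H →L[ℂ] H :=
  haveI : CompleteSpace M := hM.completeSpace_coe
  M.subtypeL.comp (M.orthogonalProjectionOnto)

/-- The element `p_M = tπ_M + π_{Mᗮ}` of `A[t,t⁻¹]`. -/
def pEl (M : Submodule ℂ H) (hM : IsClosed (M : Set H)) : LaurentOp H :=
  .ofCoeff (Finsupp.single (1 : ℤ) (projL M hM) +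
    Finsupp.single (0 : ℤ) (projL Mᗮ M.isClosed_orthogonal))

/-- The element `t = t·1` of `A[t,t⁻¹]`. -/
def tEl (H : Type*) [NormedAddCommGroup H] [InnerProductSpace ℂ H] [CompleteSpace H] :
    LaurentOp H :=
  .ofCoeff (Finsupp.single (1 : ℤ) 1)

/-- `M` is invariant under every element of the commutant `A'`. -/
def InvariantC (A : VonNeumannAlgebra H) (M : Submodule ℂ H) : Prop :=
  ∀ φ ∈ A.commutant, ∀ x ∈ M, φ x ∈ M

instance : CoeFun (LaurentOp H) (fun _ => ℤ → H →L[ℂ] H) := ⟨fun φ => φ.coeff⟩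

set_option linter.unusedSectionVars false

variable {A : VonNeumannAlgebra H}

lemma lstar_apply (φ : LaurentOp H) (i : ℤ) : lstar φ i = star (φ (-i)) := by
  rfl

lemma lstar_single (a : ℤ) (T : H →L[ℂ] H) :
    lstar (AddMonoidAlgebra.single a T : LaurentOp H) = AddMonoidAlgebra.single (-a) (star T) := by
  ext i : 2
  rw [lstar_apply, AddMonoidAlgebra.coeff_single, AddMonoidAlgebra.coeff_single,
    Finsupp.single_apply, Finsupp.single_apply]
  split_ifs with h1 h2 h2
  · rfl
  · omega
  · omega
  · simp

lemma lstar_add (a b : LaurentOp H) : lstar (a + b) = lstar a + lstar b := by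
  ext i : 2
  rw [AddMonoidAlgebra.coeff_add, Finsupp.add_apply, lstar_apply, lstar_apply, lstar_apply,
    AddMonoidAlgebra.coeff_add, Finsupp.add_apply, star_add]

lemma lstar_zero : lstar (0 : LaurentOp H) = 0 := by
  ext i : 2; rw [lstar_apply]; simp

lemma lstar_lstar (φ : LaurentOp H) : lstar (lstar φ) = φ := by
  ext i : 2; rw [lstar_apply, lstar_apply, neg_neg, star_star]

lemma lstar_one : lstar (1 : LaurentOp H) = 1 := by
  rw [AddMonoidAlgebra.one_def]
  show lstar (AddMonoidAlgebra.single 0 1 : LaurentOp H) = _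
  rw [lstar_single, neg_zero, star_one]

lemma lstar_mul (a b : LaurentOp H) : lstar (a * b) = lstar b * lstar a := by
  induction a using AddMonoidAlgebra.induction_linear with
  | zero => rw [zero_mul, lstar_zero, mul_zero]
  | add f g hf hg => rw [add_mul, lstar_add, hf, hg, lstar_add, mul_add]
  | single n T =>
    induction b using AddMonoidAlgebra.induction_linear with
    | zero => rw [mul_zero, lstar_zero, zero_mul]
    | add f g hf hg => rw [mul_add, lstar_add, hf, hg, lstar_add, add_mul]
    | single m U =>
      rw [AddMonoidAlgebra.single_mul_single, lstar_single, lstar_single, lstar_single,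
        AddMonoidAlgebra.single_mul_single, star_mul]
      congr 1
      omega

lemma eps1_single (a : ℤ) (T : H →L[ℂ] H) : eps1 (AddMonoidAlgebra.single a T : LaurentOp H) = T := by
  unfold eps1
  rw [AddMonoidAlgebra.coeff_single]
  exact Finsupp.sum_single_index rfl

lemma eps1_add (a b : LaurentOp H) : eps1 (a + b) = eps1 a + eps1 b := by
  unfold eps1
  rw [AddMonoidAlgebra.coeff_add]
  exact Finsupp.sum_add_index' (fun _ => rfl) (fun _ _ _ => rfl)

lemma eps1_zero : eps1 (0 : LaurentOp H) = 0 := rfl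

lemma eps1_one : eps1 (1 : LaurentOp H) = 1 := by
  rw [AddMonoidAlgebra.one_def]
  exact eps1_single 0 1

lemma eps1_mul (a b : LaurentOp H) : eps1 (a * b) = eps1 a * eps1 b := by
  induction a using AddMonoidAlgebra.induction_linear with
  | zero => rw [zero_mul, eps1_zero, zero_mul]
  | add f g hf hg => rw [add_mul, eps1_add, hf, hg, eps1_add, add_mul]
  | single n T =>
    induction b using AddMonoidAlgebra.induction_linear with
    | zero => rw [mul_zero, eps1_zero, mul_zero]
    | add f g hf hg => rw [mul_add, eps1_add, hf, hg, eps1_add, mul_add]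
    | single m U =>
      rw [AddMonoidAlgebra.single_mul_single, eps1_single, eps1_single, eps1_single]

lemma eps1_lstar (φ : LaurentOp H) : eps1 (lstar φ) = star (eps1 φ) := by
  unfold eps1 lstar
  rw [AddMonoidAlgebra.coeff_ofCoeff, Finsupp.sum_equivMapDomain, Finsupp.sum_mapRange_index (fun _ => rfl), Finsupp.sum,
    Finsupp.sum, star_sum]

lemma act_apply (φ : LaurentOp H) (x : ℤ → H) (i : ℤ) :
    act φ x i = φ.coeff.sum fun k T => T (x (i - k)) := rfl

lemma act_single (a : ℤ) (T : H →L[ℂ] H) (x : ℤ → H) :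
    act (AddMonoidAlgebra.single a T : LaurentOp H) x = fun i => T (x (i - a)) := by
  funext i
  rw [act_apply, AddMonoidAlgebra.coeff_single, Finsupp.sum_single_index rfl]

lemma act_zero_left (x : ℤ → H) : act (0 : LaurentOp H) x = 0 := by
  funext i
  rw [act_apply, AddMonoidAlgebra.coeff_zero, Finsupp.sum_zero_index]
  rfl

lemma act_add_left (φ ψ : LaurentOp H) (x : ℤ → H) :
    act (φ + ψ) x = act φ x + act ψ x := by
  funext i
  rw [act_apply]
  rw [AddMonoidAlgebra.coeff_add, Finsupp.sum_add_index' (fun _ => rfl) (fun _ T U => by rw [ContinuousLinearMap.add_apply])]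
  rfl

lemma act_add_right (φ : LaurentOp H) (x y : ℤ → H) :
    act φ (x + y) = act φ x + act φ y := by
  funext i
  show (∑ k ∈ φ.coeff.support, φ k ((x + y) (i - k))) = _
  simp only [Pi.add_apply, map_add, Finset.sum_add_distrib]
  rfl

lemma act_smul_right (φ : LaurentOp H) (c : ℂ) (x : ℤ → H) :
    act φ (c • x) = c • act φ x := by
  funext i
  show (∑ k ∈ φ.coeff.support, φ k ((c • x) (i - k))) = _
  simp only [Pi.smul_apply, map_smul, ← Finset.smul_sum]
  rfl

lemma act_zero_right (φ : LaurentOp H) : act φ (0 : ℤ → H) = 0 := by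
  funext i
  show (∑ k ∈ φ.coeff.support, φ k ((0 : ℤ → H) (i - k))) = _
  simp

lemma act_mul (φ ψ : LaurentOp H) (x : ℤ → H) :
    act (φ * ψ) x = act φ (act ψ x) := by
  induction φ using AddMonoidAlgebra.induction_linear with
  | zero => rw [zero_mul, act_zero_left, act_zero_left]
  | add f g hf hg => rw [add_mul, act_add_left, hf, hg, act_add_left]
  | single n T =>
    induction ψ using AddMonoidAlgebra.induction_linear with
    | zero =>
      rw [mul_zero, act_zero_left, act_zero_right]
    | add f g hf hg =>
      rw [mul_add, act_add_left, hf, hg, act_add_left, act_add_right]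
    | single m U =>
      rw [AddMonoidAlgebra.single_mul_single, act_single, act_single, act_single]
      funext i
      show T (U (x (i - (n + m)))) = T (U (x (i - n - m)))
      rw [sub_sub]

lemma act_one (x : ℤ → H) : act (1 : LaurentOp H) x = x := by
  rw [AddMonoidAlgebra.one_def]
  show act (AddMonoidAlgebra.single 0 1 : LaurentOp H) x = x
  rw [act_single]
  funext i
  rw [sub_zero]
  rfl

lemma act_continuous (φ : LaurentOp H) : Continuous (act φ) := by
  apply continuous_pi
  intro i
  apply continuous_finset_sum
  intro k _
  exact (φ k).continuous.comp (continuous_apply (i - k))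

variable {A : VonNeumannAlgebra H}

lemma coeff_mul_mem {a b : LaurentOp H} (ha : ∀ i, a i ∈ A) (hb : ∀ i, b i ∈ A) (n : ℤ) :
    (a * b) n ∈ A := by
  rw [AddMonoidAlgebra.mul_apply]
  apply sum_mem
  intro i _
  apply sum_mem
  intro j _
  dsimp only
  split_ifs
  · exact mul_mem (ha i) (hb j)
  · exact zero_mem A

lemma InPPU.one : InPPU A (1 : LaurentOp H) :=
  ⟨fun i => by
    rw [AddMonoidAlgebra.one_def, AddMonoidAlgebra.coeff_single, Finsupp.single_apply]
    split_ifs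
    · exact one_mem A
    · exact zero_mem A,
   by rw [lstar_one, one_mul], by rw [lstar_one, one_mul], eps1_one⟩

lemma InPPU.mul {a b : LaurentOp H} (ha : InPPU A a) (hb : InPPU A b) : InPPU A (a * b) := by
  obtain ⟨ha1, ha2, ha3, ha4⟩ := ha
  obtain ⟨hb1, hb2, hb3, hb4⟩ := hb
  refine ⟨coeff_mul_mem ha1 hb1, ?_, ?_, ?_⟩
  · rw [lstar_mul, mul_assoc, ← mul_assoc (lstar a), ha2, one_mul, hb2]
  · rw [lstar_mul, mul_assoc, ← mul_assoc b, hb3, one_mul, ha3]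
  · rw [eps1_mul, ha4, hb4, one_mul]

lemma InPPU.lstar_mem {a : LaurentOp H} (ha : InPPU A a) : InPPU A (lstar a) := by
  obtain ⟨ha1, ha2, ha3, ha4⟩ := ha
  refine ⟨fun i => ?_, ?_, ?_, ?_⟩
  · rw [lstar_apply]
    exact star_mem (ha1 (-i))
  · rw [lstar_lstar, ha3]
  · rw [lstar_lstar, ha2]
  · rw [eps1_lstar, ha4, star_one]

lemma InPPUplus.one : InPPUplus A (1 : LaurentOp H) :=
  ⟨InPPU.one, fun i hi => by
    rw [AddMonoidAlgebra.one_def, AddMonoidAlgebra.coeff_single, Finsupp.single_apply, if_neg (by omega)]⟩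

lemma InPPUplus.mul {a b : LaurentOp H} (ha : InPPUplus A a) (hb : InPPUplus A b) :
    InPPUplus A (a * b) := by
  refine ⟨ha.1.mul hb.1, fun n hn => ?_⟩
  rw [AddMonoidAlgebra.mul_apply]
  apply Finset.sum_eq_zero
  intro i hi
  apply Finset.sum_eq_zero
  intro j hj
  dsimp only
  rw [Finsupp.mem_support_iff] at hi hj
  have hi0 : 0 ≤ i := by by_contra h; exact hi (ha.2 i (by omega))
  have hj0 : 0 ≤ j := by by_contra h; exact hj (hb.2 j (by omega))
  rw [if_neg (by omega)]

/-- Antisymmetry core: a PPU element which is a polynomial both ways is 1. -/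
lemma ppu_poly_poly_eq_one {ψ : LaurentOp H} (hψ : InPPU A ψ)
    (h1 : ∀ i < (0 : ℤ), ψ i = 0) (h2 : ∀ i < (0 : ℤ), lstar ψ i = 0) :
    ψ = 1 := by
  have hsupp : ∀ i, i ≠ 0 → ψ i = 0 := by
    intro i hi
    rcases lt_or_gt_of_ne hi with h | h
    · exact h1 i h
    · have := h2 (-i) (by omega)
      rw [lstar_apply, neg_neg] at this
      have : star (star (ψ i)) = 0 := by rw [this, star_zero]
      rwa [star_star] at this
  have hform : ψ = AddMonoidAlgebra.single 0 (ψ 0) := by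
    apply AddMonoidAlgebra.coeff_injective
    apply Finsupp.ext
    intro i
    rw [AddMonoidAlgebra.coeff_single, Finsupp.single_apply]
    split_ifs with h
    · rw [← h]
    · exact hsupp i (fun hc => h hc.symm)
  have : eps1 ψ = ψ 0 := by
    rw [hform, eps1_single]
    exact (Finsupp.single_eq_same).symm
  rw [hψ.2.2.2] at this
  rw [hform, ← this, AddMonoidAlgebra.one_def]

open scoped InnerProductSpace

set_option synthInstance.maxHeartbeats 400000 in
lemma hasOrthProj {M : Submodule ℂ H} (hM : IsClosed (M : Set H)) :
    Submodule.HasOrthogonalProjection M :=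
  haveI : CompleteSpace M := hM.completeSpace_coe
  inferInstance

section proj

variable {M : Submodule ℂ H} (hM : IsClosed (M : Set H))

lemma projL_apply (x : H) :
    haveI : CompleteSpace M := hM.completeSpace_coe
    projL M hM x = (M.orthogonalProjectionOnto x : H) := rfl

lemma projL_mem (x : H) : projL M hM x ∈ M := by
  haveI : CompleteSpace M := hM.completeSpace_coe
  rw [projL_apply]
  exact (M.orthogonalProjectionOnto x).2

lemma projL_eq_self {v : H} (hv : v ∈ M) : projL M hM v = v := by
  haveI : CompleteSpace M := hM.completeSpace_coe
  rw [projL_apply]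
  exact congrArg Subtype.val (Submodule.orthogonalProjectionOnto_mem_subspace_eq_self (⟨v, hv⟩ : M))

lemma projL_orth_of_mem_orth {v : H} (hv : v ∈ Mᗮ) : projL M hM v = 0 := by
  haveI : CompleteSpace M := hM.completeSpace_coe
  rw [projL_apply, Submodule.orthogonalProjectionOnto_apply_of_mem_orthogonal hv]
  rfl

lemma projL_orth_apply_mem {v : H} (hv : v ∈ M) :
    projL Mᗮ M.isClosed_orthogonal v = 0 := by
  haveI : CompleteSpace (Mᗮ : Submodule ℂ H) := M.isClosed_orthogonal.completeSpace_coe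
  haveI := hasOrthProj M.isClosed_orthogonal
  rw [projL_apply M.isClosed_orthogonal,
    Submodule.orthogonalProjectionOnto_apply_of_mem_orthogonal
      (Submodule.le_orthogonal_orthogonal M hv)]
  rfl

lemma projL_add_orth (x : H) :
    projL M hM x + projL Mᗮ M.isClosed_orthogonal x = x := by
  haveI : CompleteSpace M := hM.completeSpace_coe
  exact M.starProjection_add_starProjection_orthogonal x

lemma projL_one_sub (x : H) :
    projL Mᗮ M.isClosed_orthogonal x = x - projL M hM x :=
  eq_sub_of_add_eq' (projL_add_orth hM x)

lemma projL_idem : projL M hM * projL M hM = projL M hM := by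
  ext x
  exact projL_eq_self hM (projL_mem hM x)

lemma projL_orth_idem :
    projL Mᗮ M.isClosed_orthogonal * projL Mᗮ M.isClosed_orthogonal =
      projL Mᗮ M.isClosed_orthogonal := by
  ext x
  exact projL_eq_self M.isClosed_orthogonal (projL_mem M.isClosed_orthogonal x)

lemma projL_mul_orth : projL M hM * projL Mᗮ M.isClosed_orthogonal = 0 := by
  ext x
  exact projL_orth_of_mem_orth hM (projL_mem M.isClosed_orthogonal x)

lemma projL_orth_mul : projL Mᗮ M.isClosed_orthogonal * projL M hM = 0 := by
  ext x
  exact projL_orth_apply_mem (projL_mem hM x)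

lemma projL_star : star (projL M hM) = projL M hM := by
  haveI : CompleteSpace M := hM.completeSpace_coe
  exact isSelfAdjoint_starProjection M

lemma projL_orth_star :
    star (projL Mᗮ M.isClosed_orthogonal) = projL Mᗮ M.isClosed_orthogonal := by
  haveI : CompleteSpace (Mᗮ : Submodule ℂ H) := M.isClosed_orthogonal.completeSpace_coe
  exact isSelfAdjoint_starProjection Mᗮ

lemma projL_commute (u : H →L[ℂ] H) (h1 : ∀ v ∈ M, u v ∈ M)
    (h2 : ∀ v ∈ M, star u v ∈ M) : u * projL M hM = projL M hM * u := by
  haveI : CompleteSpace M := hM.completeSpace_coe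
  ext x
  show u (projL M hM x) = projL M hM (u x)
  symm
  show M.starProjection (u x) = u (projL M hM x)
  apply Submodule.eq_starProjection_of_mem_of_inner_eq_zero
  · exact h1 _ (projL_mem hM x)
  · intro w hw
    rw [← map_sub, ← ContinuousLinearMap.adjoint_inner_right]
    have horth : x - projL M hM x ∈ Mᗮ := Submodule.sub_starProjection_mem_orthogonal x
    have hmem : (ContinuousLinearMap.adjoint u) w ∈ M := by
      rw [← ContinuousLinearMap.star_eq_adjoint]
      exact h2 w hw
    exact (Submodule.mem_orthogonal' _ _).mp horth _ hmem

lemma projL_mem_vna {A : VonNeumannAlgebra H}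
    (hinv : ∀ u ∈ A.commutant, ∀ v ∈ M, u v ∈ M) :
    projL M hM ∈ A := by
  have h : projL M hM ∈ A.commutant.commutant := by
    rw [VonNeumannAlgebra.mem_commutant_iff]
    intro u hu
    exact projL_commute hM u (hinv u hu) (hinv (star u) (star_mem hu))
  rwa [VonNeumannAlgebra.commutant_commutant] at h

include hM in
lemma projL_orth_mem_vna {A : VonNeumannAlgebra H}
    (hinv : ∀ u ∈ A.commutant, ∀ v ∈ M, u v ∈ M) :
    projL Mᗮ M.isClosed_orthogonal ∈ A := by
  have h1 : projL M hM ∈ A := projL_mem_vna hM hinv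
  have heq : projL Mᗮ M.isClosed_orthogonal = 1 - projL M hM := by
    ext x
    show projL Mᗮ M.isClosed_orthogonal x = x - projL M hM x
    exact projL_one_sub hM x
  rw [heq]
  exact sub_mem (one_mem A) h1

end proj

def HleS (n : ℤ) : Submodule ℂ (ℤ → H) where
  carrier := {x | ∀ i > n, x i = 0}
  add_mem' := by
    intro a b ha hb i hi
    show a i + b i = 0
    rw [ha i hi, hb i hi, add_zero]
  zero_mem' := fun i _ => rfl
  smul_mem' := fun c x hx i hi => by
    show c • x i = 0
    rw [hx i hi, smul_zero]

lemma mem_HleS {n : ℤ} {x : ℤ → H} : x ∈ HleS n ↔ ∀ i > n, x i = 0 := Iff.rfl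

lemma HleS_closed (n : ℤ) : IsClosed ((HleS n : Submodule ℂ (ℤ → H)) : Set (ℤ → H)) := by
  have : ((HleS n : Submodule ℂ (ℤ → H)) : Set (ℤ → H)) =
      ⋂ (i : ℤ), ⋂ (_ : i > n), {x : ℤ → H | x i = 0} := by
    ext x
    simp only [Set.mem_iInter, Set.mem_setOf_eq]
    rfl
  rw [this]
  exact isClosed_iInter fun i => isClosed_iInter fun _ =>
    isClosed_eq (continuous_apply i) continuous_const

lemma act_Hle {α : LaurentOp H} {d : ℤ} (hα : ∀ k, α k ≠ 0 → k ≤ d) {n : ℤ} {x : ℤ → H}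
    (hx : ∀ i > n, x i = 0) : ∀ i > n + d, act α x i = 0 := by
  intro i hi
  rw [act_apply]
  apply Finset.sum_eq_zero
  intro k hk
  rw [Finsupp.mem_support_iff] at hk
  have hkd := hα k hk
  show (α k) (x (i - k)) = 0
  rw [hx (i - k) (by omega), map_zero]

def SsetS (α : LaurentOp H) : Submodule ℂ (ℤ → H) where
  carrier := {x | ∀ i > (0 : ℤ), act (lstar α) x i = 0}
  add_mem' := by
    intro x y hx hy i hi
    rw [act_add_right]
    show act (lstar α) x i + act (lstar α) y i = 0
    rw [hx i hi, hy i hi, add_zero]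
  zero_mem' := by
    intro i _
    rw [act_zero_right]
    rfl
  smul_mem' := by
    intro c x hx i hi
    rw [act_smul_right]
    show c • act (lstar α) x i = 0
    rw [hx i hi, smul_zero]

lemma mem_SsetS {α : LaurentOp H} {x : ℤ → H} :
    x ∈ SsetS α ↔ ∀ i > (0 : ℤ), act (lstar α) x i = 0 := Iff.rfl

lemma SsetS_closed (α : LaurentOp H) :
    IsClosed ((SsetS α : Submodule ℂ (ℤ → H)) : Set (ℤ → H)) := by
  have : ((SsetS α : Submodule ℂ (ℤ → H)) : Set (ℤ → H)) =
      act (lstar α) ⁻¹' ((HleS 0 : Submodule ℂ (ℤ → H)) : Set (ℤ → H)) := by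
    ext x
    simp only [Set.mem_preimage, SetLike.mem_coe, mem_SsetS, mem_HleS]
  rw [this]
  exact (HleS_closed 0).preimage (act_continuous (lstar α))

def tinv : LaurentOp H := AddMonoidAlgebra.single (-1 : ℤ) 1

lemma act_tinv (x : ℤ → H) : act (tinv : LaurentOp H) x = fun i => x (i + 1) := by
  rw [tinv, act_single]
  funext i
  rw [sub_neg_eq_add]
  rfl

lemma tinv_comm (β : LaurentOp H) : tinv * β = β * tinv := by
  induction β using AddMonoidAlgebra.induction_linear with
  | zero => rw [mul_zero, zero_mul]
  | add f g hf hg => rw [mul_add, add_mul, hf, hg]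
  | single m U =>
    unfold tinv
    rw [AddMonoidAlgebra.single_mul_single, AddMonoidAlgebra.single_mul_single,
      one_mul, mul_one, add_comm]

lemma SsetS_shift {α : LaurentOp H} {x : ℤ → H} (hx : x ∈ SsetS α) :
    act tinv x ∈ SsetS α := by
  intro i hi
  have : act (lstar α) (act tinv x) = act tinv (act (lstar α) x) := by
    rw [← act_mul, ← act_mul, tinv_comm]
  rw [this, act_tinv]
  exact hx (i + 1) (by omega)

lemma act_commute_coeff {β : LaurentOp H} {u : H →L[ℂ] H}
    (h : ∀ k, β k * u = u * β k) (x : ℤ → H) :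
    act β (fun i => u (x i)) = fun i => u (act β x i) := by
  funext i
  rw [act_apply, act_apply]
  have : ∀ k ∈ β.coeff.support, β k (u (x (i - k))) = u (β k (x (i - k))) := by
    intro k _
    have := congrArg (fun T => T (x (i - k))) (h k)
    simpa [ContinuousLinearMap.mul_apply] using this
  rw [Finsupp.sum, Finsupp.sum, Finset.sum_congr rfl this, ← map_sum]

variable {A : VonNeumannAlgebra H}

lemma lstar_coeff_commute {α : LaurentOp H} (hA : ∀ i, α i ∈ A) {u : H →L[ℂ] H}
    (hu : u ∈ A.commutant) (k : ℤ) : (lstar α) k * u = u * (lstar α) k := by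
  rw [lstar_apply]
  rw [VonNeumannAlgebra.mem_commutant_iff] at hu
  exact hu _ (star_mem (hA (-k)))

lemma SsetS_commutant {α : LaurentOp H} (hA : ∀ i, α i ∈ A) {u : H →L[ℂ] H}
    (hu : u ∈ A.commutant) {x : ℤ → H} (hx : x ∈ SsetS α) :
    (fun i => u (x i)) ∈ SsetS α := by
  intro i hi
  rw [act_commute_coeff (lstar_coeff_commute hA hu)]
  show u (act (lstar α) x i) = 0
  rw [hx i hi, map_zero]

def dirac (j : ℤ) (v : H) : ℤ → H := fun i => if i = j then v else 0

lemma act_dirac (μ : LaurentOp H) (v : H) (i : ℤ) : act μ (dirac 0 v) i = μ i v := by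
  rw [act_apply]
  have : ∀ k, (μ k) (dirac 0 v (i - k)) = if k = i then μ k v else 0 := by
    intro k
    rw [dirac]
    by_cases h : i - k = 0
    · rw [if_pos h, if_pos (by omega)]
    · rw [if_neg h, if_neg (by omega), map_zero]
  rw [Finsupp.sum, Finset.sum_congr rfl (fun k _ => this k), Finset.sum_ite_eq' μ.coeff.support i]
  split_ifs with h
  · rfl
  · rw [Finsupp.notMem_support_iff] at h
    rw [h]
    rfl

/-- `γ = α⁻¹β` polynomial implies `Sset α ⊆ Sset β`. -/
lemma sset_mono_of_poly {α β : LaurentOp H} (hα : α * lstar α = 1)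
    (hpoly : ∀ i < (0 : ℤ), (lstar α * β) i = 0) :
    (SsetS α : Set (ℤ → H)) ⊆ (SsetS β : Set (ℤ → H)) := by
  intro x hx
  rw [SetLike.mem_coe, mem_SsetS] at hx ⊢
  have key : act (lstar β) x = act (lstar β * α) (act (lstar α) x) := by
    rw [← act_mul, mul_assoc, hα, mul_one]
  intro i hi
  rw [key]
  have hc : ∀ k, (lstar β * α) k ≠ 0 → k ≤ 0 := by
    intro k hk
    by_contra h
    have : (lstar β * α) k = lstar (lstar α * β) k := by
      rw [lstar_mul, lstar_lstar]
    rw [this, lstar_apply, hpoly (-k) (by omega), star_zero] at hk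
    exact hk rfl
  have := act_Hle hc (n := 0) (x := act (lstar α) x) hx
  exact this i (by omega)

/-- `Sset α ⊆ Sset β` implies `γ = α⁻¹β` is polynomial. -/
lemma poly_of_sset_mono {α β : LaurentOp H} (hα : lstar α * α = 1)
    (hsub : (SsetS α : Set (ℤ → H)) ⊆ (SsetS β : Set (ℤ → H))) :
    ∀ i < (0 : ℤ), (lstar α * β) i = 0 := by
  intro i hi
  have key : ∀ v : H, ∀ j > (0 : ℤ), (lstar β * α) j v = 0 := by
    intro v j hj
    have hx : act α (dirac 0 v) ∈ SsetS α := by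
      rw [mem_SsetS]
      intro m hm
      rw [← act_mul, hα, act_one, dirac, if_neg (by omega)]
    have hxβ := hsub hx
    rw [SetLike.mem_coe, mem_SsetS] at hxβ
    have := hxβ j hj
    rw [← act_mul, act_dirac] at this
    exact this
  have hop : (lstar β * α) (-i) = 0 := by
    ext v
    exact key v (-i) (by omega)
  have : (lstar α * β) i = lstar (lstar β * α) i := by
    rw [lstar_mul, lstar_lstar]
  rw [this, lstar_apply, hop, star_zero]

set_option linter.unusedSectionVars false

section pElFacts

variable {M : Submodule ℂ H} (hM : IsClosed (M : Set H))

lemma projL_add_orth_op : projL M hM + projL Mᗮ M.isClosed_orthogonal = 1 := by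
  ext x
  exact projL_add_orth hM x

lemma lstar_pEl : lstar (pEl M hM) =
    AddMonoidAlgebra.single (-1 : ℤ) (projL M hM) +
      AddMonoidAlgebra.single (0 : ℤ) (projL Mᗮ M.isClosed_orthogonal) := by
  rw [pEl, AddMonoidAlgebra.ofCoeff_add, AddMonoidAlgebra.ofCoeff_single,
    AddMonoidAlgebra.ofCoeff_single, lstar_add, lstar_single, lstar_single, projL_star, projL_orth_star, neg_zero]

lemma pEl_mul_lstar : pEl M hM * lstar (pEl M hM) = 1 := by
  rw [lstar_pEl, pEl, AddMonoidAlgebra.ofCoeff_add, AddMonoidAlgebra.ofCoeff_single,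
    AddMonoidAlgebra.ofCoeff_single, add_mul, mul_add, mul_add,
    AddMonoidAlgebra.single_mul_single, AddMonoidAlgebra.single_mul_single,
    AddMonoidAlgebra.single_mul_single, AddMonoidAlgebra.single_mul_single]
  simp only [add_neg_cancel, neg_add_cancel, add_zero, zero_add]
  rw [projL_idem, projL_orth_idem, projL_mul_orth, projL_orth_mul]
  rw [AddMonoidAlgebra.single_zero, AddMonoidAlgebra.single_zero, add_zero, zero_add,
    ← AddMonoidAlgebra.single_add, projL_add_orth_op]
  exact (AddMonoidAlgebra.one_def).symm

lemma lstar_mul_pEl : lstar (pEl M hM) * pEl M hM = 1 := by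
  rw [lstar_pEl, pEl, AddMonoidAlgebra.ofCoeff_add, AddMonoidAlgebra.ofCoeff_single,
    AddMonoidAlgebra.ofCoeff_single, add_mul, mul_add, mul_add,
    AddMonoidAlgebra.single_mul_single, AddMonoidAlgebra.single_mul_single,
    AddMonoidAlgebra.single_mul_single, AddMonoidAlgebra.single_mul_single]
  simp only [add_neg_cancel, neg_add_cancel, add_zero, zero_add]
  rw [projL_idem, projL_orth_idem, projL_mul_orth, projL_orth_mul]
  rw [AddMonoidAlgebra.single_zero, AddMonoidAlgebra.single_zero, add_zero, zero_add,
    ← AddMonoidAlgebra.single_add, projL_add_orth_op]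
  exact (AddMonoidAlgebra.one_def).symm

lemma eps1_pEl : eps1 (pEl M hM) = 1 := by
  rw [pEl, AddMonoidAlgebra.ofCoeff_add, AddMonoidAlgebra.ofCoeff_single,
    AddMonoidAlgebra.ofCoeff_single, eps1_add, eps1_single, eps1_single, projL_add_orth_op]

lemma InPPU_pEl {A : VonNeumannAlgebra H}
    (hinv : ∀ u ∈ A.commutant, ∀ v ∈ M, u v ∈ M) : InPPU A (pEl M hM) := by
  refine ⟨fun i => ?_, lstar_mul_pEl hM, pEl_mul_lstar hM, eps1_pEl hM⟩
  rw [pEl]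
  show Finsupp.single (1 : ℤ) (projL M hM) i +
    Finsupp.single (0 : ℤ) (projL Mᗮ M.isClosed_orthogonal) i ∈ A
  apply add_mem
  · rw [Finsupp.single_apply]
    split_ifs
    · exact projL_mem_vna hM hinv
    · exact zero_mem A
  · rw [Finsupp.single_apply]
    split_ifs
    · exact projL_orth_mem_vna hM hinv
    · exact zero_mem A

lemma act_pEl (x : ℤ → H) : act (pEl M hM) x =
    fun i => projL M hM (x (i - 1)) + projL Mᗮ M.isClosed_orthogonal (x i) := by
  rw [pEl, AddMonoidAlgebra.ofCoeff_add, AddMonoidAlgebra.ofCoeff_single,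
    AddMonoidAlgebra.ofCoeff_single, act_add_left, act_single, act_single]
  funext i
  show projL M hM (x (i - 1)) + projL Mᗮ M.isClosed_orthogonal (x (i - 0)) = _
  rw [sub_zero]

lemma act_lstar_pEl (x : ℤ → H) : act (lstar (pEl M hM)) x =
    fun i => projL M hM (x (i + 1)) + projL Mᗮ M.isClosed_orthogonal (x i) := by
  rw [lstar_pEl, act_add_left, act_single, act_single]
  funext i
  show projL M hM (x (i - -1)) + projL Mᗮ M.isClosed_orthogonal (x (i - 0)) = _
  rw [sub_zero, sub_neg_eq_add]

end pElFacts

def tpow (n : ℤ) : LaurentOp H := AddMonoidAlgebra.single n 1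

lemma lstar_tpow (n : ℤ) : lstar (tpow n : LaurentOp H) = tpow (-n) := by
  rw [tpow, lstar_single, star_one]
  rfl

lemma tpow_mul_tpow (n m : ℤ) : (tpow n : LaurentOp H) * tpow m = tpow (n + m) := by
  rw [tpow, tpow, AddMonoidAlgebra.single_mul_single, one_mul]
  rfl

lemma tpow_zero : (tpow 0 : LaurentOp H) = 1 := (AddMonoidAlgebra.one_def).symm

lemma InPPU_tpow {A : VonNeumannAlgebra H} (n : ℤ) : InPPU A (tpow n : LaurentOp H) := by
  refine ⟨fun i => ?_, ?_, ?_, ?_⟩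
  · rw [tpow, AddMonoidAlgebra.coeff_single, Finsupp.single_apply]
    split_ifs
    · exact one_mem A
    · exact zero_mem A
  · rw [lstar_tpow, tpow_mul_tpow, neg_add_cancel, tpow_zero]
  · rw [lstar_tpow, tpow_mul_tpow, add_neg_cancel, tpow_zero]
  · rw [tpow]; exact eps1_single n 1

lemma act_tpow (n : ℤ) (x : ℤ → H) : act (tpow n : LaurentOp H) x = fun i => x (i - n) := by
  rw [tpow, act_single]
  rfl

lemma SsetS_tpow (n : ℤ) : (SsetS (tpow n : LaurentOp H)) = HleS n := by
  ext x
  rw [mem_SsetS, mem_HleS]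
  constructor
  · intro h j hj
    have := h (j - n) (by omega)
    rw [lstar_tpow, act_tpow] at this
    simpa using this
  · intro h i hi
    rw [lstar_tpow, act_tpow]
    show x (i - -n) = 0
    rw [sub_neg_eq_add]
    exact h (i + n) (by omega)

def actLin (α : LaurentOp H) : (ℤ → H) →ₗ[ℂ] (ℤ → H) where
  toFun := act α
  map_add' := act_add_right α
  map_smul' := act_smul_right α

lemma HleS_congr {a b : ℤ} (h : a = b) : (HleS a : Submodule ℂ (ℤ → H)) = HleS b := by rw [h]

theorem main_classification (A : VonNeumannAlgebra H) :
    ∀ (d : ℕ) (n : ℤ) (S : Submodule ℂ (ℤ → H)),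
      IsClosed (S : Set (ℤ → H)) →
      (∀ x ∈ S, act tinv x ∈ S) →
      (∀ u ∈ A.commutant, ∀ x ∈ S, (fun i => u (x i)) ∈ S) →
      HleS (n - (d : ℤ)) ≤ S → S ≤ HleS n →
      ∃ σ : LaurentOp H, InPPU A σ ∧ SsetS σ = S := by
  intro d
  induction d with
  | zero =>
    intro n S _ _ _ hlow hup
    refine ⟨tpow n, InPPU_tpow n, ?_⟩
    rw [SsetS_tpow]
    apply le_antisymm _ hup
    rw [Nat.cast_zero, sub_zero] at hlow
    exact hlow
  | succ d ih =>
    intro n S hSc hSt hSu hlow hup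
    have hcast : ((d + 1 : ℕ) : ℤ) = (d : ℤ) + 1 := by push_cast; ring
    rw [hcast] at hlow
    -- the top coefficient space
    set M : Submodule ℂ H :=
      (Submodule.span ℂ {v | ∃ x ∈ S, x n = v}).topologicalClosure with hMdef
    have hMc : IsClosed (M : Set H) := Submodule.isClosed_topologicalClosure _
    have hMgen : ∀ x ∈ S, x n ∈ M := fun x hx =>
      Submodule.le_topologicalClosure _ (Submodule.subset_span ⟨x, hx, rfl⟩)
    -- M is invariant under the commutant
    have hMinv : ∀ u ∈ A.commutant, ∀ v ∈ M, u v ∈ M := by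
      intro u hu
      have : M ≤ Submodule.comap (u : H →ₗ[ℂ] H) M := by
        apply Submodule.topologicalClosure_minimal
        · rw [Submodule.span_le]
          rintro v ⟨x, hx, rfl⟩
          exact hMgen _ (hSu u hu x hx)
        · exact hMc.preimage u.continuous
      exact fun v hv => this hv
    -- S is invariant under nonnegative shifts
    have hshiftNat : ∀ m : ℕ, ∀ x ∈ S, (fun i => x (i + (m : ℤ))) ∈ S := by
      intro m
      induction m with
      | zero =>
        intro x hx
        have h0 : (fun i => x (i + ((0 : ℕ) : ℤ))) = x := by
          funext i
          norm_num
        rw [h0]; exact hx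
      | succ m ihm =>
        intro x hx
        have h1 := hSt _ (ihm x hx)
        rw [act_tinv] at h1
        have h2 : (fun i => (fun j => x (j + (m : ℤ))) (i + 1)) =
            fun i => x (i + ((m + 1 : ℕ) : ℤ)) := by
          funext i
          show x (i + 1 + (m : ℤ)) = x (i + ((m + 1 : ℕ) : ℤ))
          congr 1
          push_cast
          ring
        rwa [h2] at h1
    have hshift : ∀ k : ℤ, 0 ≤ k → ∀ x ∈ S, (fun i => x (i + k)) ∈ S := by
      intro k hk x hx
      have hres := hshiftNat k.toNat x hx
      have hc : ((k.toNat : ℤ)) = k := Int.toNat_of_nonneg hk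
      rwa [hc] at hres
    -- diracs with values in M in low degrees belong to S
    have hdelta : ∀ v ∈ M, ∀ j : ℤ, j ≤ n - ((d : ℤ) + 1) + 1 → dirac j v ∈ S := by
      intro v hv j hj
      let T : Submodule ℂ H :=
        { carrier := {w | dirac j w ∈ S}
          add_mem' := by
            intro a b ha hb
            have : dirac j (a + b) = dirac j a + dirac j b := by
              funext i; by_cases h : i = j <;> simp [dirac, h]
            show dirac j (a + b) ∈ S
            rw [this]; exact add_mem ha hb
          zero_mem' := by
            have : dirac j (0 : H) = 0 := by funext i; simp [dirac]
            show dirac j (0 : H) ∈ S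
            rw [this]; exact zero_mem S
          smul_mem' := by
            intro c a ha
            have : dirac j (c • a) = c • dirac j a := by
              funext i; by_cases h : i = j <;> simp [dirac, h]
            show dirac j (c • a) ∈ S
            rw [this]; exact Submodule.smul_mem S c ha }
      have hTc : IsClosed (T : Set H) := by
        have hcont : Continuous fun v : H => dirac j v := by
          apply continuous_pi
          intro i
          by_cases h : i = j
          · simp only [dirac, h, eq_self_iff_true, if_true]
            exact continuous_id'
          · simpa [dirac, h] using continuous_const (y := (0 : H))
        exact hSc.preimage hcont
      have hMT : M ≤ T := by
        apply Submodule.topologicalClosure_minimal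
        · rw [Submodule.span_le]
          rintro w ⟨x, hx, rfl⟩
          show dirac j (x n) ∈ S
          have hx' : (fun i => x (i + (n - j))) ∈ S := hshift (n - j) (by omega) x hx
          have hr : (fun i => x (i + (n - j))) - dirac j (x n) ∈ S := by
            apply hlow
            intro i hi
            show x (i + (n - j)) - dirac j (x n) i = 0
            by_cases h : i = j
            · rw [h, dirac, if_pos rfl]
              have hj2 : j + (n - j) = n := by omega
              rw [hj2, sub_self]
            · rw [dirac, if_neg h, sub_zero]
              exact (hup hx) (i + (n - j)) (by omega)
          have := sub_mem hx' hr
          simpa using this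
        · exact hTc
      exact hMT hv
    -- applying the projection coefficientwise to low-degree sequences lands in S
    have hπz : ∀ z : ℤ → H, (∀ i : ℤ, i > n - ((d : ℤ) + 1) + 1 → z i = 0) →
        (fun i => projL M hMc (z i)) ∈ S := by
      intro z hz
      set bz : ℤ := n - ((d : ℤ) + 1) + 1 with hbz
      set seq : ℕ → (ℤ → H) := fun m => fun i => if -(m : ℤ) ≤ i then projL M hMc (z i) else 0
        with hseq
      have hseqmem : ∀ m, seq m ∈ S := by
        intro m
        have hsum : seq m = ∑ j ∈ Finset.Icc (-(m : ℤ)) bz, dirac j (projL M hMc (z j)) := by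
          funext i
          have hR : (∑ j ∈ Finset.Icc (-(m : ℤ)) bz, dirac j (projL M hMc (z j))) i =
              ∑ j ∈ Finset.Icc (-(m : ℤ)) bz, (if i = j then projL M hMc (z j) else 0) := by
            rw [Finset.sum_apply]
            rfl
          rw [hR, Finset.sum_ite_eq (Finset.Icc (-(m : ℤ)) bz) i
            (fun j => projL M hMc (z j))]
          show (if -(m : ℤ) ≤ i then projL M hMc (z i) else 0) = _
          simp only [Finset.mem_Icc]
          split_ifs with h1 h2 h2
          · rfl
          · rw [hz i (by omega), map_zero]
          · exact absurd h2.1 h1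
          · rfl
        rw [hsum]
        apply sum_mem
        intro j hjmem
        rw [Finset.mem_Icc] at hjmem
        exact hdelta _ (projL_mem hMc (z j)) j hjmem.2
      have htend : Filter.Tendsto seq Filter.atTop (nhds (fun i => projL M hMc (z i))) := by
        rw [tendsto_pi_nhds]
        intro i
        apply tendsto_atTop_of_eventually_const (i₀ := i.natAbs)
        intro m hm
        show (if -(m : ℤ) ≤ i then projL M hMc (z i) else 0) = projL M hMc (z i)
        rw [if_pos (by omega)]
      exact hSc.mem_of_tendsto htend (Filter.Eventually.of_forall hseqmem)
    -- the paraunitary building block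
    set p : LaurentOp H := pEl M hMc with hpdef
    have hpU : InPPU A p := InPPU_pEl hMc hMinv
    -- the reduced subspace
    set S' : Submodule ℂ (ℤ → H) := S.comap (actLin p) with hS'def
    have hmemS' : ∀ x, x ∈ S' ↔ act p x ∈ S := fun x => Iff.rfl
    have hS'c : IsClosed (S' : Set (ℤ → H)) := by
      have : (S' : Set (ℤ → H)) = act p ⁻¹' (S : Set (ℤ → H)) := rfl
      rw [this]
      exact hSc.preimage (act_continuous p)
    have hS't : ∀ x ∈ S', act tinv x ∈ S' := by
      intro x hx
      rw [hmemS'] at hx ⊢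
      have : act p (act tinv x) = act tinv (act p x) := by
        rw [← act_mul, ← act_mul, tinv_comm]
      rw [this]
      exact hSt _ hx
    have hS'u : ∀ u ∈ A.commutant, ∀ x ∈ S', (fun i => u (x i)) ∈ S' := by
      intro u hu x hx
      rw [hmemS'] at hx ⊢
      have hcomm : ∀ k, p k * u = u * p k := fun k =>
        (VonNeumannAlgebra.mem_commutant_iff.mp hu) _ (hpU.1 k)
      rw [act_commute_coeff hcomm]
      exact hSu u hu _ hx
    have hS'low : HleS ((n - 1) - (d : ℤ)) ≤ S' := by
      intro y hy
      rw [mem_HleS] at hy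
      rw [hmemS']
      set z : ℤ → H := fun i => y (i - 1) - y i with hzdef
      have hact : act p y = y + fun i => projL M hMc (z i) := by
        rw [hpdef, act_pEl]
        funext i
        show projL M hMc (y (i - 1)) + projL Mᗮ M.isClosed_orthogonal (y i) =
          y i + projL M hMc (z i)
        rw [projL_one_sub hMc, hzdef]
        rw [map_sub]
        abel
      rw [hact]
      apply add_mem
      · apply hlow
        intro i hi
        exact hy i (by omega)
      · apply hπz
        intro i hi
        rw [hzdef]
        show y (i - 1) - y i = 0
        rw [hy (i - 1) (by omega), hy i (by omega), sub_zero]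
    have hS'up : S' ≤ HleS (n - 1) := by
      intro x hx
      rw [hmemS'] at hx
      set s : ℤ → H := act p x with hsdef
      have hxs : x = act (lstar p) s := by
        rw [hsdef, ← act_mul, lstar_mul_pEl, act_one]
      rw [mem_HleS]
      intro i hi
      rw [hxs, act_lstar_pEl]
      show projL M hMc (s (i + 1)) + projL Mᗮ M.isClosed_orthogonal (s i) = 0
      have hsS : ∀ m > n, s m = 0 := fun m hm => (hup hx) m hm
      rcases eq_or_lt_of_le (show n ≤ i by omega) with heq | hlt
      · rw [hsS (i + 1) (by omega), map_zero, zero_add]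
        rw [← heq]
        exact projL_orth_apply_mem (hMgen s hx)
      · rw [hsS (i + 1) (by omega), hsS i (by omega), map_zero, map_zero, add_zero]
    obtain ⟨σ', hσ'U, hσ'S⟩ := ih (n - 1) S' hS'c hS't hS'u hS'low hS'up
    refine ⟨p * σ', hpU.mul hσ'U, ?_⟩
    ext x
    rw [mem_SsetS]
    have hls : lstar (p * σ') = lstar σ' * lstar p := lstar_mul p σ'
    constructor
    · intro h
      have hxin : act (lstar p) x ∈ SsetS σ' := by
        rw [mem_SsetS]
        intro i hi
        have := h i hi
        rw [hls, act_mul] at this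
        exact this
      rw [hσ'S, hmemS'] at hxin
      have : act p (act (lstar p) x) = x := by
        rw [← act_mul, pEl_mul_lstar, act_one]
      rwa [this] at hxin
    · intro hxS i hi
      have hxin : act (lstar p) x ∈ S' := by
        rw [hmemS']
        have : act p (act (lstar p) x) = x := by
          rw [← act_mul, pEl_mul_lstar, act_one]
        rw [this]
        exact hxS
      rw [← hσ'S, mem_SsetS] at hxin
      rw [hls, act_mul]
      exact hxin i hi

lemma exists_bound (φ φ' : LaurentOp H) :
    ∃ N : ℕ, (∀ k, φ k ≠ 0 → -(N : ℤ) ≤ k ∧ k ≤ (N : ℤ)) ∧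
      (∀ k, φ' k ≠ 0 → -(N : ℤ) ≤ k ∧ k ≤ (N : ℤ)) := by
  refine ⟨(φ.coeff.support ∪ φ'.coeff.support).sup fun k => k.natAbs, ?_, ?_⟩
  · intro k hk
    have hmem : k ∈ φ.coeff.support ∪ φ'.coeff.support :=
      Finset.mem_union_left _ (Finsupp.mem_support_iff.mpr hk)
    have h2 := Finset.le_sup (f := fun k : ℤ => k.natAbs) hmem
    omega
  · intro k hk
    have hmem : k ∈ φ.coeff.support ∪ φ'.coeff.support :=
      Finset.mem_union_right _ (Finsupp.mem_support_iff.mpr hk)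
    have h2 := Finset.le_sup (f := fun k : ℤ => k.natAbs) hmem
    omega

lemma HleS_le_SsetS {α : LaurentOp H} {N : ℕ}
    (hb : ∀ k, α k ≠ 0 → -(N : ℤ) ≤ k ∧ k ≤ (N : ℤ)) :
    HleS (-(N : ℤ)) ≤ SsetS α := by
  intro x hx i hi
  have hc : ∀ k, (lstar α) k ≠ 0 → k ≤ (N : ℤ) := by
    intro k hk
    rw [lstar_apply] at hk
    have : α (-k) ≠ 0 := fun h => hk (by rw [h, star_zero])
    have := (hb _ this).1
    omega
  have := act_Hle hc (n := -(N : ℤ)) (x := x) hx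
  exact this i (by omega)

lemma SsetS_le_HleS {α : LaurentOp H} (hα : α * lstar α = 1) {N : ℕ}
    (hb : ∀ k, α k ≠ 0 → -(N : ℤ) ≤ k ∧ k ≤ (N : ℤ)) :
    SsetS α ≤ HleS (N : ℤ) := by
  intro x hx
  rw [mem_SsetS] at hx
  rw [mem_HleS]
  intro i hi
  have hxeq : x = act α (act (lstar α) x) := by
    rw [← act_mul, hα, act_one]
  rw [hxeq]
  have hc : ∀ k, α k ≠ 0 → k ≤ (N : ℤ) := fun k hk => (hb k hk).2
  have := act_Hle hc (n := (0 : ℤ)) (x := act (lstar α) x) hx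
  exact this i (by omega)

def coeffLin (u : H →L[ℂ] H) : (ℤ → H) →ₗ[ℂ] (ℤ → H) where
  toFun := fun x i => u (x i)
  map_add' := fun x y => by funext i; show u (x i + y i) = u (x i) + u (y i); rw [map_add]
  map_smul' := fun c x => by
    funext i
    show u (c • x i) = c • u (x i)
    rw [map_smul]

lemma coeffLin_continuous (u : H →L[ℂ] H) : Continuous (coeffLin u : (ℤ → H) → (ℤ → H)) :=
  continuous_pi fun i => u.continuous.comp (continuous_apply i)

/-- Existence of least upper bounds. -/
lemma lub_exists {φ φ' : LaurentOp H} (hφ : InPPU A φ) (hφ' : InPPU A φ') :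
    ∃ σ : LaurentOp H, InPPU A σ ∧
      InPPUplus A (lstar φ * σ) ∧ InPPUplus A (lstar φ' * σ) ∧
      ∀ τ : LaurentOp H, InPPU A τ →
        InPPUplus A (lstar φ * τ) → InPPUplus A (lstar φ' * τ) →
        InPPUplus A (lstar σ * τ) := by
  obtain ⟨N, hbφ, hbφ'⟩ := exists_bound φ φ'
  set s : Set (ℤ → H) := (SsetS φ : Set (ℤ → H)) ∪ (SsetS φ' : Set (ℤ → H)) with hs
  set S : Submodule ℂ (ℤ → H) := (Submodule.span ℂ s).topologicalClosure with hS
  have hspan_le : Submodule.span ℂ s ≤ S := Submodule.le_topologicalClosure _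
  have hsub1 : (SsetS φ : Set (ℤ → H)) ⊆ S := fun x hx =>
    hspan_le (Submodule.subset_span (Set.mem_union_left _ hx))
  have hsub2 : (SsetS φ' : Set (ℤ → H)) ⊆ S := fun x hx =>
    hspan_le (Submodule.subset_span (Set.mem_union_right _ hx))
  have hSc : IsClosed (S : Set (ℤ → H)) := Submodule.isClosed_topologicalClosure _
  have hSt : ∀ x ∈ S, act tinv x ∈ S := by
    have : S ≤ Submodule.comap (actLin tinv) S := by
      apply Submodule.topologicalClosure_minimal
      · rw [Submodule.span_le]
        intro x hx
        rcases hx with hx | hx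
        · exact hsub1 (SsetS_shift hx)
        · exact hsub2 (SsetS_shift hx)
      · exact hSc.preimage (act_continuous tinv)
    exact fun x hx => this hx
  have hSu : ∀ u ∈ A.commutant, ∀ x ∈ S, (fun i => u (x i)) ∈ S := by
    intro u hu
    have : S ≤ Submodule.comap (coeffLin u) S := by
      apply Submodule.topologicalClosure_minimal
      · rw [Submodule.span_le]
        intro x hx
        rcases hx with hx | hx
        · exact hsub1 (SsetS_commutant hφ.1 hu hx)
        · exact hsub2 (SsetS_commutant hφ'.1 hu hx)
      · exact hSc.preimage (coeffLin_continuous u)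
    exact fun x hx => this hx
  have hlow : HleS ((N : ℤ) - ((2 * N : ℕ) : ℤ)) ≤ S := by
    have h1 : HleS ((N : ℤ) - ((2 * N : ℕ) : ℤ)) = (HleS (-(N : ℤ)) : Submodule ℂ (ℤ → H)) :=
      HleS_congr (by push_cast; ring)
    rw [h1]
    exact le_trans (HleS_le_SsetS hbφ) (le_trans le_rfl (SetLike.coe_subset_coe.mp hsub1))
  have hup : S ≤ HleS (N : ℤ) := by
    apply Submodule.topologicalClosure_minimal
    · rw [Submodule.span_le]
      intro x hx
      rcases hx with hx | hx
      · exact SsetS_le_HleS hφ.2.2.1 hbφ hx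
      · exact SsetS_le_HleS hφ'.2.2.1 hbφ' hx
    · exact HleS_closed _
  obtain ⟨σ, hσU, hσS⟩ := main_classification A (2 * N) (N : ℤ) S hSc hSt hSu hlow hup
  have hσsub1 : (SsetS φ : Set (ℤ → H)) ⊆ (SsetS σ : Set (ℤ → H)) := by
    rw [hσS]; exact hsub1
  have hσsub2 : (SsetS φ' : Set (ℤ → H)) ⊆ (SsetS σ : Set (ℤ → H)) := by
    rw [hσS]; exact hsub2
  refine ⟨σ, hσU, ?_, ?_, ?_⟩
  · exact ⟨hφ.lstar_mem.mul hσU, poly_of_sset_mono hφ.2.1 hσsub1⟩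
  · exact ⟨hφ'.lstar_mem.mul hσU, poly_of_sset_mono hφ'.2.1 hσsub2⟩
  · intro τ hτ h1 h2
    have hm1 : (SsetS φ : Set (ℤ → H)) ⊆ SsetS τ := sset_mono_of_poly hφ.2.2.1 h1.2
    have hm2 : (SsetS φ' : Set (ℤ → H)) ⊆ SsetS τ := sset_mono_of_poly hφ'.2.2.1 h2.2
    have hSτ : S ≤ SsetS τ := by
      apply Submodule.topologicalClosure_minimal
      · rw [Submodule.span_le]
        intro x hx
        rcases hx with hx | hx
        · exact hm1 hx
        · exact hm2 hx
      · exact SsetS_closed τ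
    have hσsubτ : (SsetS σ : Set (ℤ → H)) ⊆ SsetS τ := by
      rw [hσS]
      exact fun x hx => hSτ hx
    exact ⟨hσU.lstar_mem.mul hτ, poly_of_sset_mono hσU.2.1 hσsubτ⟩

/-- Existence of greatest lower bounds. -/
lemma glb_exists {φ φ' : LaurentOp H} (hφ : InPPU A φ) (hφ' : InPPU A φ') :
    ∃ σ : LaurentOp H, InPPU A σ ∧
      InPPUplus A (lstar σ * φ) ∧ InPPUplus A (lstar σ * φ') ∧
      ∀ τ : LaurentOp H, InPPU A τ →
        InPPUplus A (lstar τ * φ) → InPPUplus A (lstar τ * φ') →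
        InPPUplus A (lstar τ * σ) := by
  obtain ⟨N, hbφ, hbφ'⟩ := exists_bound φ φ'
  set S : Submodule ℂ (ℤ → H) := SsetS φ ⊓ SsetS φ' with hS
  have hSc : IsClosed (S : Set (ℤ → H)) := by
    rw [hS, Submodule.coe_inf]
    exact (SsetS_closed φ).inter (SsetS_closed φ')
  have hSt : ∀ x ∈ S, act tinv x ∈ S := by
    intro x hx
    rw [hS, Submodule.mem_inf] at hx ⊢
    exact ⟨SsetS_shift hx.1, SsetS_shift hx.2⟩
  have hSu : ∀ u ∈ A.commutant, ∀ x ∈ S, (fun i => u (x i)) ∈ S := by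
    intro u hu x hx
    rw [hS, Submodule.mem_inf] at hx ⊢
    exact ⟨SsetS_commutant hφ.1 hu hx.1, SsetS_commutant hφ'.1 hu hx.2⟩
  have hlow : HleS ((N : ℤ) - ((2 * N : ℕ) : ℤ)) ≤ S := by
    have h1 : HleS ((N : ℤ) - ((2 * N : ℕ) : ℤ)) = (HleS (-(N : ℤ)) : Submodule ℂ (ℤ → H)) :=
      HleS_congr (by push_cast; ring)
    rw [h1, hS]
    exact le_inf (HleS_le_SsetS hbφ) (HleS_le_SsetS hbφ')
  have hup : S ≤ HleS (N : ℤ) :=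
    le_trans inf_le_left (SsetS_le_HleS hφ.2.2.1 hbφ)
  obtain ⟨σ, hσU, hσS⟩ := main_classification A (2 * N) (N : ℤ) S hSc hSt hSu hlow hup
  have hσ1 : (SsetS σ : Set (ℤ → H)) ⊆ SsetS φ := by
    rw [hσS]; exact fun x hx => (Submodule.mem_inf.mp hx).1
  have hσ2 : (SsetS σ : Set (ℤ → H)) ⊆ SsetS φ' := by
    rw [hσS]; exact fun x hx => (Submodule.mem_inf.mp hx).2
  refine ⟨σ, hσU, ?_, ?_, ?_⟩
  · exact ⟨hσU.lstar_mem.mul hφ, poly_of_sset_mono hσU.2.1 hσ1⟩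
  · exact ⟨hσU.lstar_mem.mul hφ', poly_of_sset_mono hσU.2.1 hσ2⟩
  · intro τ hτ h1 h2
    have hm1 : (SsetS τ : Set (ℤ → H)) ⊆ SsetS φ := sset_mono_of_poly hτ.2.2.1 h1.2
    have hm2 : (SsetS τ : Set (ℤ → H)) ⊆ SsetS φ' := sset_mono_of_poly hτ.2.2.1 h2.2
    have hτS : (SsetS τ : Set (ℤ → H)) ⊆ SsetS σ := by
      rw [hσS]
      intro x hx
      exact Submodule.mem_inf.mpr ⟨hm1 hx, hm2 hx⟩
    exact ⟨hτ.lstar_mem.mul hσU, poly_of_sset_mono hτ.2.1 hτS⟩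

/--
Let `A` be a von Neumann algebra.  The relation on `PPU(A)` defined by `φ ≤ φ'` iff
`φ⁻¹φ' = φ*·φ' ∈ PPU⁺(A)` is a partial order under which `PPU(A)` is a lattice: every
pair of elements of `PPU(A)` has a least upper bound and a greatest lower bound.
-/
theorem stmt16 (A : VonNeumannAlgebra H) :
    -- reflexivity
    (∀ φ : LaurentOp H, InPPU A φ → InPPUplus A (lstar φ * φ)) ∧
    -- antisymmetry
    (∀ φ φ' : LaurentOp H, InPPU A φ → InPPU A φ' →
      InPPUplus A (lstar φ * φ') → InPPUplus A (lstar φ' * φ) → φ = φ') ∧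
    -- transitivity
    (∀ φ φ' φ'' : LaurentOp H, InPPU A φ → InPPU A φ' → InPPU A φ'' →
      InPPUplus A (lstar φ * φ') → InPPUplus A (lstar φ' * φ'') →
      InPPUplus A (lstar φ * φ'')) ∧
    -- least upper bounds exist
    (∀ φ φ' : LaurentOp H, InPPU A φ → InPPU A φ' →
      ∃ σ : LaurentOp H, InPPU A σ ∧
        InPPUplus A (lstar φ * σ) ∧ InPPUplus A (lstar φ' * σ) ∧
        ∀ τ : LaurentOp H, InPPU A τ →
          InPPUplus A (lstar φ * τ) → InPPUplus A (lstar φ' * τ) →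
          InPPUplus A (lstar σ * τ)) ∧
    -- greatest lower bounds exist
    (∀ φ φ' : LaurentOp H, InPPU A φ → InPPU A φ' →
      ∃ σ : LaurentOp H, InPPU A σ ∧
        InPPUplus A (lstar σ * φ) ∧ InPPUplus A (lstar σ * φ') ∧
        ∀ τ : LaurentOp H, InPPU A τ →
          InPPUplus A (lstar τ * φ) → InPPUplus A (lstar τ * φ') →
          InPPUplus A (lstar τ * σ)) := by
  refine ⟨?_, ?_, ?_, ?_, ?_⟩
  · -- reflexivity
    intro φ hφ
    rw [hφ.2.1]
    exact InPPUplus.one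
  · -- antisymmetry
    intro φ φ' hφ hφ' h1 h2
    have hψ : lstar φ * φ' = 1 := by
      apply ppu_poly_poly_eq_one h1.1 h1.2
      intro i hi
      rw [lstar_mul, lstar_lstar]
      exact h2.2 i hi
    have hchain : φ * (lstar φ * φ') = φ' := by
      rw [← mul_assoc, hφ.2.2.1, one_mul]
    rw [hψ, mul_one] at hchain
    exact hchain
  · -- transitivity
    intro φ φ' φ'' hφ hφ' hφ'' h1 h2
    have hprod : (lstar φ * φ') * (lstar φ' * φ'') = lstar φ * φ'' := by
      rw [mul_assoc, ← mul_assoc φ', hφ'.2.2.1, one_mul]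
    have := h1.mul h2
    rwa [hprod] at this
  · -- lub
    intro φ φ' hφ hφ'
    exact lub_exists hφ hφ'
  · -- glb
    intro φ φ' hφ hφ'
    exact glb_exists hφ hφ'
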